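/- For each fixed k with 1 ≤ k ≤ g, exactly one of k and 2g+1-k appears in the image set {σ(1),...,σ(g)} of any final element σ ∈ F_g, and the map F_g → F_g interchanging the two alternatives (i.e., composing with the transposition swapping k and 2g+1-k) is a fixed-point-free involution on F_g. -/

import Mathlib

/-- The condition defining `W_g` inside `S_{2g}` (0-indexed). -/
def Wcond (g : ℕ) (σ : Equiv.Perm (Fin (2 * g))) : Prop :=
  ∀ i : Fin (2 * g), i.val < g → (σ i).val + (σ i.rev).val = 2 * g - 1

/-- Final (Kostant) elements of `W_g`. -/
def IsFinal (g : ℕ) (σ : Equiv.Perm (Fin (2 * g))) : Prop :=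
  Wcond g σ ∧ ∀ i j : Fin (2 * g), i < j → j.val < g → σ i < σ j

/-- The image set `{σ(1),…,σ(g)}` of the first `g` positions. -/
def imgSet (g : ℕ) (σ : Equiv.Perm (Fin (2 * g))) : Finset (Fin (2 * g)) :=
  Finset.univ.filter (fun v => (σ.symm v).val < g)

/-!
A final element is determined by its image set `S`: it lists `S` increasingly in the first `g`
positions and is then forced by the symmetry `σ(rev i) = rev (σ i)`. The image sets that occur
are exactly the transversals of the pairs `{v, rev v}`, so `F_g` is in bijection with these
transversals. The transposition of `k` and `2g+1-k = rev k` maps transversals to transversals,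
is an involution, and moves every transversal since it changes whether `k` belongs to it.
-/

open Finset

lemma Fin.swap_rev_apply_rev {n : ℕ} (a v : Fin n) :
    Equiv.swap a a.rev v.rev = (Equiv.swap a a.rev v).rev := by
  simpa [Equiv.swap_comm, Equiv.Perm.mul_apply] using
    congrArg (· v.rev) (Equiv.swap_apply_apply Fin.revPerm a a.rev)

lemma Finset.mem_image_swap {α : Type*} [DecidableEq α] (s : Finset α) (a b v : α) :
    v ∈ s.image (Equiv.swap a b) ↔ Equiv.swap a b v ∈ s := by
  rw [← Equiv.coe_toEmbedding, ← map_eq_image, mem_map_equiv, Equiv.symm_swap]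
  rfl

lemma Finset.image_swap_image_swap {α : Type*} [DecidableEq α] (s : Finset α) (a b : α) :
    (s.image (Equiv.swap a b)).image (Equiv.swap a b) = s := by
  ext v
  simp only [mem_image_swap, Equiv.swap_apply_self]

def IsRevTransversal {n : ℕ} (S : Finset (Fin n)) : Prop :=
  ∀ v : Fin n, v.rev ∈ S ↔ v ∉ S

namespace IsRevTransversal

variable {n : ℕ} {S : Finset (Fin n)}

lemma two_mul_card (hS : IsRevTransversal S) : 2 * #S = n := by
  have hcompl : Sᶜ = S.map Fin.revPerm.toEmbedding := by
    ext v
    rw [mem_compl, mem_map_equiv, Fin.revPerm_symm, Fin.revPerm_apply, hS]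
  have := card_compl S
  rw [hcompl, card_map, Fintype.card_fin] at this
  omega

lemma image_swap (hS : IsRevTransversal S) (a : Fin n) :
    IsRevTransversal (S.image (Equiv.swap a a.rev)) := by
  intro v
  rw [mem_image_swap, mem_image_swap, Fin.swap_rev_apply_rev, hS]

lemma image_swap_ne (hS : IsRevTransversal S) (a : Fin n) :
    S.image (Equiv.swap a a.rev) ≠ S := by
  intro h
  have ha := mem_image_swap S a a.rev a
  rw [h, Equiv.swap_apply_left] at ha
  exact iff_not_self (ha.trans (hS a))

end IsRevTransversal

section Final

variable {g : ℕ}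

lemma IsRevTransversal.card_eq {S : Finset (Fin (2 * g))} (hS : IsRevTransversal S) : #S = g := by
  have := hS.two_mul_card
  omega

lemma wcond_iff_apply_rev {σ : Equiv.Perm (Fin (2 * g))} :
    Wcond g σ ↔ ∀ i, σ i.rev = (σ i).rev := by
  refine ⟨fun h i => ?_, fun h i _ => ?_⟩
  · have hsum : (σ i).val + (σ i.rev).val = 2 * g - 1 := by
      rcases lt_or_ge i.val g with hi | hi
      · exact h i hi
      · have := h i.rev (by rw [Fin.val_rev]; omega)
        rwa [Fin.rev_rev, add_comm] at this
    ext
    rw [Fin.val_rev]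
    omega
  · rw [h, Fin.val_rev]
    omega

lemma Wcond.symm_apply_rev {σ : Equiv.Perm (Fin (2 * g))} (h : Wcond g σ) (v : Fin (2 * g)) :
    σ.symm v.rev = (σ.symm v).rev := by
  rw [σ.symm_apply_eq, wcond_iff_apply_rev.mp h, σ.apply_symm_apply]

@[simp]
lemma mem_imgSet {σ : Equiv.Perm (Fin (2 * g))} {v : Fin (2 * g)} :
    v ∈ imgSet g σ ↔ (σ.symm v).val < g := by
  simp [imgSet]

lemma isRevTransversal_imgSet {σ : Equiv.Perm (Fin (2 * g))} (h : Wcond g σ) :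
    IsRevTransversal (imgSet g σ) := by
  intro v
  rw [mem_imgSet, mem_imgSet, h.symm_apply_rev, Fin.val_rev]
  omega

variable {S : Finset (Fin (2 * g))} (hS : IsRevTransversal S)

def finalFun (i : Fin (2 * g)) : Fin (2 * g) :=
  if h : i.val < g then S.orderEmbOfFin hS.card_eq ⟨i, h⟩
  else (S.orderEmbOfFin hS.card_eq ⟨i.rev, by rw [Fin.val_rev]; omega⟩).rev

lemma finalFun_of_lt {i : Fin (2 * g)} (hi : i.val < g) :
    finalFun hS i = S.orderEmbOfFin hS.card_eq ⟨i, hi⟩ :=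
  dif_pos hi

lemma finalFun_rev (i : Fin (2 * g)) : finalFun hS i.rev = (finalFun hS i).rev := by
  rcases lt_or_ge i.val g with hi | hi
  · rw [finalFun, dif_neg (by rw [Fin.val_rev]; omega), finalFun_of_lt hS hi]
    simp only [Fin.rev_rev]
  · rw [finalFun_of_lt hS (by rw [Fin.val_rev]; omega), finalFun, dif_neg (by omega), Fin.rev_rev]

lemma finalFun_mem_iff (i : Fin (2 * g)) : finalFun hS i ∈ S ↔ i.val < g := by
  rcases lt_or_ge i.val g with hi | hi
  · simp only [finalFun_of_lt hS hi, orderEmbOfFin_mem, hi]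
  · rw [finalFun, dif_neg (by omega), hS]
    simp only [orderEmbOfFin_mem, not_true, false_iff, not_lt, hi]

lemma finalFun_injective : Function.Injective (finalFun hS) := by
  have inj_lt : ∀ i j : Fin (2 * g), i.val < g → finalFun hS i = finalFun hS j → i = j := by
    intro i j hi hij
    have hj : j.val < g := (finalFun_mem_iff hS j).mp (hij ▸ (finalFun_mem_iff hS i).mpr hi)
    rw [finalFun_of_lt hS hi, finalFun_of_lt hS hj] at hij
    simpa [Fin.ext_iff] using (S.orderEmbOfFin hS.card_eq).injective hij
  intro i j hij
  rcases lt_or_ge i.val g with hi | hi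
  · exact inj_lt i j hi hij
  · have := inj_lt i.rev j.rev (by rw [Fin.val_rev]; omega) (by rw [finalFun_rev, finalFun_rev, hij])
    exact Fin.rev_injective this

noncomputable def finalPerm : Equiv.Perm (Fin (2 * g)) :=
  Equiv.ofBijective _ (Finite.injective_iff_bijective.mp (finalFun_injective hS))

lemma isFinal_finalPerm : IsFinal g (finalPerm hS) := by
  refine ⟨wcond_iff_apply_rev.mpr (finalFun_rev hS), fun i j hij hj => ?_⟩
  change finalFun hS i < finalFun hS j
  rw [finalFun_of_lt hS ((Fin.lt_def.mp hij).trans hj), finalFun_of_lt hS hj]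
  exact (S.orderEmbOfFin hS.card_eq).strictMono hij

lemma imgSet_finalPerm : imgSet g (finalPerm hS) = S := by
  ext v
  rw [mem_imgSet, ← finalFun_mem_iff hS]
  exact Iff.of_eq (congrArg (· ∈ S) ((finalPerm hS).apply_symm_apply v))

lemma IsFinal.eq_finalPerm {σ : Equiv.Perm (Fin (2 * g))} (hσ : IsFinal g σ) :
    σ = finalPerm (isRevTransversal_imgSet hσ.1) := by
  have hT := isRevTransversal_imgSet hσ.1
  have first : ∀ i : Fin (2 * g), i.val < g → σ i = finalFun hT i := by
    intro i hi
    have hsorted := orderEmbOfFin_unique hT.card_eq (f := fun m : Fin g => σ (Fin.castLE (by omega) m))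
      (fun m => by simp) (fun m m' hm => hσ.2 _ _ hm m'.isLt)
    rw [finalFun_of_lt hT hi, ← hsorted]
    rfl
  ext1 i
  change σ i = finalFun hT i
  rcases lt_or_ge i.val g with hi | hi
  · exact first i hi
  · rw [← Fin.rev_rev i, wcond_iff_apply_rev.mp hσ.1, finalFun_rev,
      first i.rev (by rw [Fin.val_rev]; omega)]

end Final

noncomputable def finalEquivRevTransversal (g : ℕ) :
    {σ : Equiv.Perm (Fin (2 * g)) // IsFinal g σ} ≃
      {S : Finset (Fin (2 * g)) // IsRevTransversal S} where
  toFun σ := ⟨imgSet g σ.1, isRevTransversal_imgSet σ.2.1⟩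
  invFun S := ⟨finalPerm S.2, isFinal_finalPerm S.2⟩
  left_inv σ := Subtype.ext (σ.2.eq_finalPerm).symm
  right_inv S := Subtype.ext (imgSet_finalPerm S.2)

/-- for fixed `1 ≤ k ≤ g`, exactly one of `k` and `2g+1-k`
(0-indexed: `k-1` and `2g-k`) lies in the image set `{σ(1),…,σ(g)}` of any
final `σ`, and interchanging the two alternatives — i.e. applying the
transposition swapping `k` and `2g+1-k` to the image set — defines a
fixed-point-free involution of `F_g`. -/
theorem final_swap_involution (g k : ℕ) (hk1 : 1 ≤ k) (hkg : k ≤ g) :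
    (∀ σ : Equiv.Perm (Fin (2 * g)), IsFinal g σ →
      Xor' ((σ.symm ⟨k - 1, by omega⟩).val < g) ((σ.symm ⟨2 * g - k, by omega⟩).val < g)) ∧
    ∃ f : {σ : Equiv.Perm (Fin (2 * g)) // IsFinal g σ} →
          {σ : Equiv.Perm (Fin (2 * g)) // IsFinal g σ},
      (∀ σ, imgSet g (f σ).1 =
        (imgSet g σ.1).image (Equiv.swap (⟨k - 1, by omega⟩ : Fin (2 * g)) ⟨2 * g - k, by omega⟩)) ∧
      (∀ σ, f (f σ) = σ) ∧ (∀ σ, f σ ≠ σ) := by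
  set a : Fin (2 * g) := ⟨k - 1, by omega⟩
  have ha_rev : (⟨2 * g - k, by omega⟩ : Fin (2 * g)) = a.rev := by
    ext
    simp only [a, Fin.val_rev]
    omega
  rw [ha_rev]
  set e := finalEquivRevTransversal g
  let swapT (S : {S : Finset (Fin (2 * g)) // IsRevTransversal S}) :
      {S : Finset (Fin (2 * g)) // IsRevTransversal S} :=
    ⟨S.1.image (Equiv.swap a a.rev), S.2.image_swap a⟩
  refine ⟨fun σ hσ => ?_, e.symm ∘ swapT ∘ e, fun σ => ?_, fun σ => ?_, fun σ h => ?_⟩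
  · refine xor_iff_iff_not.mpr ?_
    rw [← mem_imgSet, ← mem_imgSet, isRevTransversal_imgSet hσ.1, not_not]
  · exact congrArg Subtype.val (e.apply_symm_apply _)
  · simp only [Function.comp_apply, e.apply_symm_apply, swapT, image_swap_image_swap]
    exact e.symm_apply_apply σ
  · exact (e σ).2.image_swap_ne a (congrArg Subtype.val (e.symm_apply_eq.mp h))
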